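/- arXiv:1406.0337 — 3 statements merged into one kernel-verified Lean document; each statement's English description precedes it below -/
import Mathlib

section
/- (Lemma 5.4 for ℤA_{n+1} modulo ⟨τ^k⟩) Fix n ≥ 1 and k ≥ 1. For all vertices x = (p,r) and y = (q,s) of ℤA_{n+1} and every m ≥ 0, ĥ_m(π(q,s), π(p,r)) = ∑_{t ∈ ℤ} h_m((q + t·k, s), (p,r)), where only finitely many terms of the sum are nonzero; consequently ĥ(π y, π x) = ∑_{t ∈ ℤ} h((q + t·k, s), x). -/
/-- Sum over the arrows `y → v` of `ℤA_{n+1}` of the value `f v`. The vertex set of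
`ℤA_{n+1}` is `ℤ × {0,…,n}`, with arrows `(q,s) → (q,s+1)` for `s < n` and
`(q,s) → (q+1,s-1)` for `0 < s`. -/
def stepA (n : ℕ) (f : ℤ × ℕ → ℕ) (y : ℤ × ℕ) : ℤ :=
  (if y.2 < n then (f (y.1, y.2 + 1) : ℤ) else 0) +
    (if 0 < y.2 then (f (y.1 + 1, y.2 - 1) : ℤ) else 0)

/-- `hA n x k y` is `h_k(y,x)` for `ℤA_{n+1}`: `h_0(y,x) = δ(y,x)` and, for `k > 0`,
`h_k(y,x) = max(h'_k(y,x), 0)` where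
`h'_k(y,x) = ∑_{y → v} h_{k-1}(v,x) - h_{k-2}(τ⁻¹ y, x)` and `τ⁻¹(q,s) = (q+1,s)`. -/
def hA (n : ℕ) (x : ℤ × ℕ) : ℕ → ℤ × ℕ → ℕ
  | 0 => fun y => if y = x then 1 else 0
  | 1 => fun y => (stepA n (hA n x 0) y).toNat
  | k + 2 => fun y =>
      (stepA n (hA n x (k + 1)) y - (hA n x k (y.1 + 1, y.2) : ℤ)).toNat

/-- `h'A n x k y` is `h'_k(y,x)` (meaningful for `k ≥ 1`):
`h'_k(y,x) = ∑_{y → v} h_{k-1}(v,x) - h_{k-2}(τ⁻¹ y, x) ∈ ℤ`. -/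
def h'A (n : ℕ) (x : ℤ × ℕ) (k : ℕ) (y : ℤ × ℕ) : ℤ :=
  stepA n (hA n x (k - 1)) y -
    (if 2 ≤ k then (hA n x (k - 2) (y.1 + 1, y.2) : ℤ) else 0)

/-- `hTotA n y x = h(y,x) = ∑_{k ≥ 0} h_k(y,x)` (a finite sum, via `finsum`). -/
noncomputable def hTotA (n : ℕ) (y x : ℤ × ℕ) : ℕ := ∑ᶠ k : ℕ, hA n x k y

/-- Sum over the arrows `y → v` of the quotient quiver `ℤA_{n+1}/⟨τ^k⟩`
(vertex set `ZMod k × {0,…,n}`) of the value `f v`. -/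
def stepQ (n k : ℕ) (f : ZMod k × ℕ → ℕ) (y : ZMod k × ℕ) : ℤ :=
  (if y.2 < n then (f (y.1, y.2 + 1) : ℤ) else 0) +
    (if 0 < y.2 then (f (y.1 + 1, y.2 - 1) : ℤ) else 0)

/-- `hQ n k x m y` is `ĥ_m(y,x)` on `ℤA_{n+1}/⟨τ^k⟩`, defined by the same recursion
as `h_m` on `ℤA_{n+1}`, with `τ⁻¹(q,s) = (q+1,s)`. -/
def hQ (n k : ℕ) (x : ZMod k × ℕ) : ℕ → ZMod k × ℕ → ℕ
  | 0 => fun y => if y = x then 1 else 0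
  | 1 => fun y => (stepQ n k (hQ n k x 0) y).toNat
  | m + 2 => fun y =>
      (stepQ n k (hQ n k x (m + 1)) y - (hQ n k x m (y.1 + 1, y.2) : ℤ)).toNat

/-- `hTotQ n k y x = ĥ(y,x) = ∑_{m ≥ 0} ĥ_m(y,x)` (a finite sum, via `finsum`). -/
noncomputable def hTotQ (n k : ℕ) (y x : ZMod k × ℕ) : ℕ := ∑ᶠ m : ℕ, hQ n k x m y

private lemma cf_aux (n : ℕ) (p : ℤ) (r : ℕ) (hr : r ≤ n) :
    ∀ m : ℕ, ∀ q : ℤ, ∀ s : ℕ, s ≤ n →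
      hA n (p, r) m (q, s) =
        if q ≤ p ∧ p ≤ q + s ∧ q + (s : ℤ) ≤ p + r ∧ p + (r : ℤ) ≤ q + n ∧
            (m : ℤ) = 2 * p + r - 2 * q - s then 1 else 0 := by
  intro m
  induction m using Nat.strong_induction_on with
  | _ m ih =>
    obtain _ | _ | m := m
    · intro q s hs
      simp only [hA, Prod.mk.injEq]
      split_ifs <;> omega
    · intro q s hs
      simp only [hA, stepA, Prod.mk.injEq]
      split_ifs <;> omega
    · intro q s hs
      have ih1 := ih (m+1) (by omega)
      have ih0 := ih m (by omega)
      simp only [hA, stepA]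
      by_cases h1 : s < n
      · rw [if_pos h1, ih1 q (s+1) (by omega), ih1 (q+1) (s-1) (by omega), ih0 (q+1) s hs]
        split_ifs <;> omega
      · rw [if_neg h1, ih1 (q+1) (s-1) (by omega), ih0 (q+1) s hs]
        split_ifs <;> omega
private lemma hA_support_eq (n : ℕ) (p : ℤ) (r : ℕ) (hr : r ≤ n) (m : ℕ) (q : ℤ) (s : ℕ)
    (hs : s ≤ n) (h : hA n (p, r) m (q, s) ≠ 0) : (m : ℤ) = 2 * p + r - 2 * q - s := by
  rw [cf_aux n p r hr m q s hs] at h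
  split_ifs at h with hc
  · exact hc.2.2.2.2
  · exact absurd rfl h

private lemma hA_vanish (n : ℕ) (p : ℤ) (r : ℕ) (hr : r ≤ n) (m : ℕ) (q : ℤ) (s : ℕ)
    (hs : s ≤ n) (hm : n < m) : hA n (p, r) m (q, s) = 0 := by
  rw [cf_aux n p r hr m q s hs, if_neg]
  intro hc
  omega

private lemma supp_finite (n k : ℕ) (hk : 1 ≤ k) (p : ℤ) (r : ℕ) (hr : r ≤ n)
    (m : ℕ) (q : ℤ) (s : ℕ) (hs : s ≤ n) :
    (Function.support fun t : ℤ => hA n (p, r) m (q + t * (k : ℤ), s)).Finite := by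
  apply Set.Subsingleton.finite
  intro t1 h1 t2 h2
  have e1 := hA_support_eq n p r hr m (q + t1 * k) s hs h1
  have e2 := hA_support_eq n p r hr m (q + t2 * k) s hs h2
  have hkz : (k : ℤ) ≠ 0 := by exact_mod_cast Nat.one_le_iff_ne_zero.mp hk
  have : t1 * (k : ℤ) = t2 * k := by linarith
  exact mul_right_cancel₀ hkz this

private lemma finsum_lift_eq (n k : ℕ) (hk : 1 ≤ k) (p : ℤ) (r : ℕ) (hr : r ≤ n)
    (m : ℕ) (q : ℤ) (s : ℕ) (hs : s ≤ n) (t₀ : ℤ)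
    (ht : (m : ℤ) = 2 * p + r - 2 * (q + t₀ * k) - s) :
    ∑ᶠ t : ℤ, hA n (p, r) m (q + t * (k : ℤ), s) = hA n (p, r) m (q + t₀ * k, s) := by
  refine finsum_eq_single _ t₀ fun t hne => ?_
  by_contra h
  have e := hA_support_eq n p r hr m (q + t * k) s hs h
  have hkz : (k : ℤ) ≠ 0 := by exact_mod_cast Nat.one_le_iff_ne_zero.mp hk
  have : t * (k : ℤ) = t₀ * k := by linarith
  exact hne (mul_right_cancel₀ hkz this)

private lemma finsum_lift_zero (n k : ℕ) (p : ℤ) (r : ℕ) (hr : r ≤ n)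
    (m : ℕ) (q : ℤ) (s : ℕ) (hs : s ≤ n)
    (ht : ∀ t : ℤ, (m : ℤ) ≠ 2 * p + r - 2 * (q + t * k) - s) :
    ∑ᶠ t : ℤ, hA n (p, r) m (q + t * (k : ℤ), s) = 0 := by
  refine finsum_eq_zero_of_forall_eq_zero fun t => ?_
  by_contra h
  exact ht t (hA_support_eq n p r hr m (q + t * k) s hs h)

private lemma zmod_exists (k : ℕ) (q p : ℤ) :
    ((q : ZMod k) = (p : ZMod k)) ↔ ∃ t : ℤ, q + t * k = p := by
  rw [ZMod.intCast_eq_intCast_iff, Int.modEq_iff_dvd]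
  constructor
  · rintro ⟨c, hc⟩; exact ⟨c, by linarith⟩
  · rintro ⟨t, ht⟩; exact ⟨t, by linarith⟩
private lemma main_aux (n k : ℕ) (hn : 1 ≤ n) (hk : 1 ≤ k) (p : ℤ) (r : ℕ) (hr : r ≤ n) :
    ∀ m : ℕ, ∀ q : ℤ, ∀ s : ℕ, s ≤ n →
      hQ n k ((p : ZMod k), r) m ((q : ZMod k), s) =
        ∑ᶠ t : ℤ, hA n (p, r) m (q + t * (k : ℤ), s) := by
  intro m
  induction m using Nat.strong_induction_on with
  | _ m ih =>
  obtain _ | _ | m := m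
  · -- m = 0
    intro q s hs
    by_cases h : ∃ t : ℤ, q + t * (k : ℤ) = p ∧ s = r
    · obtain ⟨t₀, ht, hsr⟩ := h
      rw [finsum_lift_eq n k hk p r hr 0 q s hs t₀ (by push_cast [hsr]; linarith)]
      have h1 : ((q : ZMod k) = (p : ZMod k)) := (zmod_exists k q p).mpr ⟨t₀, ht⟩
      simp [hQ, hA, Prod.mk.injEq, h1, ht, hsr]
    · have hne : (((q : ZMod k), s) : ZMod k × ℕ) ≠ ((p : ZMod k), r) := by
        intro hc
        rw [Prod.mk.injEq] at hc
        obtain ⟨t, ht⟩ := (zmod_exists k q p).mp hc.1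
        exact h ⟨t, ht, hc.2⟩
      have hz : ∀ t : ℤ, hA n (p, r) 0 (q + t * (k : ℤ), s) = 0 := by
        intro t
        have : ((q + t * (k : ℤ), s) : ℤ × ℕ) ≠ (p, r) := by
          intro hc; rw [Prod.mk.injEq] at hc; exact h ⟨t, hc.1, hc.2⟩
        simp [hA, this]
      rw [finsum_eq_zero_of_forall_eq_zero hz]
      simp [hQ, hne]
  · -- m = 1
    intro q s hs
    have hc1 : ((q : ZMod k) + 1) = (((q + 1 : ℤ)) : ZMod k) := by push_cast; ring
    have unf : hQ n k ((p : ZMod k), r) 1 ((q : ZMod k), s)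
        = (stepQ n k (hQ n k ((p : ZMod k), r) 0) ((q : ZMod k), s)).toNat := rfl
    by_cases hsol : ∃ t : ℤ, (1 : ℤ) = 2 * p + r - 2 * (q + t * k) - s
    · obtain ⟨t₀, ht₀⟩ := hsol
      rw [finsum_lift_eq n k hk p r hr 1 q s hs t₀ (by push_cast; linarith)]
      have e1 : q + 1 + t₀ * (k : ℤ) = q + t₀ * k + 1 := by ring
      by_cases h1 : s < n <;> by_cases h2 : 0 < s
      · have hs1 : ((s - 1 : ℕ) : ℤ) = (s : ℤ) - 1 := by omega
        rw [unf]
        simp only [stepQ, h1, h2, if_true, hc1,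
          ih 0 (by omega) q (s+1) (by omega), ih 0 (by omega) (q+1) (s-1) (by omega),
          finsum_lift_eq n k hk p r hr 0 q (s+1) (by omega) t₀ (by push_cast; linarith),
          finsum_lift_eq n k hk p r hr 0 (q+1) (s-1) (by omega) t₀ (by rw [hs1]; push_cast; linarith),
          e1]
        simp only [hA, stepA, h1, h2, if_true]
      · rw [unf]
        simp only [stepQ, h1, h2, if_true, if_false, hc1,
          ih 0 (by omega) q (s+1) (by omega),
          finsum_lift_eq n k hk p r hr 0 q (s+1) (by omega) t₀ (by push_cast; linarith)]
        simp only [hA, stepA, h1, h2, if_true, if_false]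
      · have hs1 : ((s - 1 : ℕ) : ℤ) = (s : ℤ) - 1 := by omega
        rw [unf]
        simp only [stepQ, h1, h2, if_true, if_false, hc1,
          ih 0 (by omega) (q+1) (s-1) (by omega),
          finsum_lift_eq n k hk p r hr 0 (q+1) (s-1) (by omega) t₀ (by rw [hs1]; push_cast; linarith),
          e1]
        simp only [hA, stepA, h1, h2, if_true, if_false]
      · exfalso; omega
    · rw [finsum_lift_zero n k p r hr 1 q s hs
        (fun t hc => hsol ⟨t, by push_cast at hc; linarith⟩)]
      by_cases h1 : s < n <;> by_cases h2 : 0 < s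
      · have hs1 : ((s - 1 : ℕ) : ℤ) = (s : ℤ) - 1 := by omega
        rw [unf]
        simp only [stepQ, h1, h2, if_true, hc1,
          ih 0 (by omega) q (s+1) (by omega), ih 0 (by omega) (q+1) (s-1) (by omega),
          finsum_lift_zero n k p r hr 0 q (s+1) (by omega)
            (fun t hc => hsol ⟨t, by push_cast at hc ⊢; linarith⟩),
          finsum_lift_zero n k p r hr 0 (q+1) (s-1) (by omega)
            (fun t hc => hsol ⟨t, by rw [hs1] at hc; push_cast at hc ⊢; linarith⟩)]
        simp
      · rw [unf]
        simp only [stepQ, h1, h2, if_true, if_false, hc1,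
          ih 0 (by omega) q (s+1) (by omega),
          finsum_lift_zero n k p r hr 0 q (s+1) (by omega)
            (fun t hc => hsol ⟨t, by push_cast at hc ⊢; linarith⟩)]
        simp
      · have hs1 : ((s - 1 : ℕ) : ℤ) = (s : ℤ) - 1 := by omega
        rw [unf]
        simp only [stepQ, h1, h2, if_true, if_false, hc1,
          ih 0 (by omega) (q+1) (s-1) (by omega),
          finsum_lift_zero n k p r hr 0 (q+1) (s-1) (by omega)
            (fun t hc => hsol ⟨t, by rw [hs1] at hc; push_cast at hc ⊢; linarith⟩)]
        simp
      · exfalso; omega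
  · -- m + 2
    intro q s hs
    have hc1 : ((q : ZMod k) + 1) = (((q + 1 : ℤ)) : ZMod k) := by push_cast; ring
    by_cases hsol : ∃ t : ℤ, (m : ℤ) + 2 = 2 * p + r - 2 * (q + t * k) - s
    · obtain ⟨t₀, ht₀⟩ := hsol
      rw [finsum_lift_eq n k hk p r hr (m+2) q s hs t₀ (by push_cast; linarith)]
      have e1 : q + 1 + t₀ * (k : ℤ) = q + t₀ * k + 1 := by ring
      by_cases h1 : s < n <;> by_cases h2 : 0 < s
      · have hs1 : ((s - 1 : ℕ) : ℤ) = (s : ℤ) - 1 := by omega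
        simp only [hQ, stepQ, h1, h2, if_true, hc1,
          ih (m+1) (by omega) q (s+1) (by omega), ih (m+1) (by omega) (q+1) (s-1) (by omega),
          ih m (by omega) (q+1) s hs,
          finsum_lift_eq n k hk p r hr (m+1) q (s+1) (by omega) t₀ (by push_cast; linarith),
          finsum_lift_eq n k hk p r hr (m+1) (q+1) (s-1) (by omega) t₀
            (by rw [hs1]; push_cast; linarith),
          finsum_lift_eq n k hk p r hr m (q+1) s hs t₀ (by push_cast; linarith),
          e1]
        simp only [hA, stepA, h1, h2, if_true]
      · simp only [hQ, stepQ, h1, h2, if_true, if_false, hc1,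
          ih (m+1) (by omega) q (s+1) (by omega), ih m (by omega) (q+1) s hs,
          finsum_lift_eq n k hk p r hr (m+1) q (s+1) (by omega) t₀ (by push_cast; linarith),
          finsum_lift_eq n k hk p r hr m (q+1) s hs t₀ (by push_cast; linarith),
          e1]
        simp only [hA, stepA, h1, h2, if_true, if_false]
      · have hs1 : ((s - 1 : ℕ) : ℤ) = (s : ℤ) - 1 := by omega
        simp only [hQ, stepQ, h1, h2, if_true, if_false, hc1,
          ih (m+1) (by omega) (q+1) (s-1) (by omega), ih m (by omega) (q+1) s hs,
          finsum_lift_eq n k hk p r hr (m+1) (q+1) (s-1) (by omega) t₀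
            (by rw [hs1]; push_cast; linarith),
          finsum_lift_eq n k hk p r hr m (q+1) s hs t₀ (by push_cast; linarith),
          e1]
        simp only [hA, stepA, h1, h2, if_true, if_false]
      · exfalso; omega
    · rw [finsum_lift_zero n k p r hr (m+2) q s hs
        (fun t hc => hsol ⟨t, by push_cast at hc ⊢; linarith⟩)]
      by_cases h1 : s < n <;> by_cases h2 : 0 < s
      · have hs1 : ((s - 1 : ℕ) : ℤ) = (s : ℤ) - 1 := by omega
        simp only [hQ, stepQ, h1, h2, if_true, hc1,
          ih (m+1) (by omega) q (s+1) (by omega), ih (m+1) (by omega) (q+1) (s-1) (by omega),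
          ih m (by omega) (q+1) s hs,
          finsum_lift_zero n k p r hr (m+1) q (s+1) (by omega)
            (fun t hc => hsol ⟨t, by push_cast at hc ⊢; linarith⟩),
          finsum_lift_zero n k p r hr (m+1) (q+1) (s-1) (by omega)
            (fun t hc => hsol ⟨t, by rw [hs1] at hc; push_cast at hc ⊢; linarith⟩),
          finsum_lift_zero n k p r hr m (q+1) s hs
            (fun t hc => hsol ⟨t, by push_cast at hc ⊢; linarith⟩)]
        simp
      · simp only [hQ, stepQ, h1, h2, if_true, if_false, hc1,
          ih (m+1) (by omega) q (s+1) (by omega), ih m (by omega) (q+1) s hs,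
          finsum_lift_zero n k p r hr (m+1) q (s+1) (by omega)
            (fun t hc => hsol ⟨t, by push_cast at hc ⊢; linarith⟩),
          finsum_lift_zero n k p r hr m (q+1) s hs
            (fun t hc => hsol ⟨t, by push_cast at hc ⊢; linarith⟩)]
        simp
      · have hs1 : ((s - 1 : ℕ) : ℤ) = (s : ℤ) - 1 := by omega
        simp only [hQ, stepQ, h1, h2, if_true, if_false, hc1,
          ih (m+1) (by omega) (q+1) (s-1) (by omega), ih m (by omega) (q+1) s hs,
          finsum_lift_zero n k p r hr (m+1) (q+1) (s-1) (by omega)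
            (fun t hc => hsol ⟨t, by rw [hs1] at hc; push_cast at hc ⊢; linarith⟩),
          finsum_lift_zero n k p r hr m (q+1) s hs
            (fun t hc => hsol ⟨t, by push_cast at hc ⊢; linarith⟩)]
        simp
      · exfalso; omega
/-- Lemma 5.4 for `ℤA_{n+1}` modulo `⟨τ^k⟩`: with `π(q,s) = ((q : ZMod k), s)`,
`ĥ_m(π y, π x) = ∑_{t ∈ ℤ} h_m((q + t·k, s), (p,r))` for all `m`, where only
finitely many terms are nonzero; consequently
`ĥ(π y, π x) = ∑_{t ∈ ℤ} h((q + t·k, s), x)`. -/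
theorem h_quotient_ZA (n k : ℕ) (hn : 1 ≤ n) (hk : 1 ≤ k)
    (p q : ℤ) (r s : ℕ) (hr : r ≤ n) (hs : s ≤ n) :
    (∀ m : ℕ,
      (Function.support fun t : ℤ => hA n (p, r) m (q + t * (k : ℤ), s)).Finite ∧
        hQ n k ((p : ZMod k), r) m ((q : ZMod k), s) =
          ∑ᶠ t : ℤ, hA n (p, r) m (q + t * (k : ℤ), s)) ∧
      (Function.support fun t : ℤ => hTotA n (q + t * (k : ℤ), s) (p, r)).Finite ∧
      hTotQ n k ((q : ZMod k), s) ((p : ZMod k), r) =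
        ∑ᶠ t : ℤ, hTotA n (q + t * (k : ℤ), s) (p, r) := by
  refine ⟨fun m => ⟨supp_finite n k hk p r hr m q s hs, main_aux n k hn hk p r hr m q s hs⟩, ?_, ?_⟩
  · -- support of hTotA finite
    have hsub : (Function.support fun t : ℤ => hTotA n (q + t * (k : ℤ), s) (p, r)) ⊆
        ⋃ m ∈ Finset.range (n+1),
          Function.support (fun t : ℤ => hA n (p, r) m (q + t * (k : ℤ), s)) := by
      intro t ht
      simp only [Function.mem_support, hTotA] at ht
      by_contra hmem
      apply ht
      refine finsum_eq_zero_of_forall_eq_zero fun m => ?_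
      by_cases hm : m ≤ n
      · by_contra hne
        exact hmem (Set.mem_biUnion (Finset.mem_range.mpr (by omega)) hne)
      · exact hA_vanish n p r hr m _ s hs (by omega)
    exact Set.Finite.subset
      (Set.Finite.biUnion (Finset.range (n+1)).finite_toSet
        (fun m _ => supp_finite n k hk p r hr m q s hs)) hsub
  · -- equation for totals
    have hUnion : (⋃ m ∈ Finset.range (n+1),
        Function.support (fun t : ℤ => hA n (p, r) m (q + t * (k : ℤ), s))).Finite :=
      Set.Finite.biUnion (Finset.range (n+1)).finite_toSet
        (fun m _ => supp_finite n k hk p r hr m q s hs)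
    set T : Finset ℤ := hUnion.toFinset with hT
    have hFT : ∀ m, m ∈ Finset.range (n+1) →
        (Function.support fun t : ℤ => hA n (p, r) m (q + t * (k : ℤ), s)) ⊆ ↑T := by
      intro m hm t ht
      simp only [hT, Set.Finite.coe_toFinset]
      exact Set.mem_biUnion hm ht
    calc hTotQ n k ((q : ZMod k), s) ((p : ZMod k), r)
        = ∑ m ∈ Finset.range (n+1), hQ n k ((p : ZMod k), r) m ((q : ZMod k), s) := by
          rw [hTotQ]
          apply finsum_eq_finset_sum_of_support_subset
          intro m hm
          simp only [Function.mem_support] at hm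
          simp only [Finset.coe_range, Set.mem_Iio]
          by_contra hc
          apply hm
          rw [main_aux n k hn hk p r hr m q s hs]
          exact finsum_eq_zero_of_forall_eq_zero fun t =>
            hA_vanish n p r hr m _ s hs (by omega)
      _ = ∑ m ∈ Finset.range (n+1), ∑ t ∈ T, hA n (p, r) m (q + t * (k : ℤ), s) := by
          refine Finset.sum_congr rfl fun m hm => ?_
          rw [main_aux n k hn hk p r hr m q s hs,
            finsum_eq_finset_sum_of_support_subset _ (hFT m hm)]
      _ = ∑ t ∈ T, ∑ m ∈ Finset.range (n+1), hA n (p, r) m (q + t * (k : ℤ), s) :=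
          Finset.sum_comm
      _ = ∑ t ∈ T, hTotA n (q + t * (k : ℤ), s) (p, r) := by
          refine Finset.sum_congr rfl fun t _ => ?_
          rw [hTotA]
          refine (finsum_eq_finset_sum_of_support_subset _ ?_).symm
          intro m hm
          simp only [Function.mem_support] at hm
          simp only [Finset.coe_range, Set.mem_Iio]
          by_contra hc
          exact hm (hA_vanish n p r hr m _ s hs (by omega))
      _ = ∑ᶠ t : ℤ, hTotA n (q + t * (k : ℤ), s) (p, r) := by
          refine (finsum_eq_finset_sum_of_support_subset _ ?_).symm
          intro t ht
          simp only [Function.mem_support, hTotA] at ht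
          simp only [hT, Set.Finite.coe_toFinset]
          by_contra hmem
          apply ht
          refine finsum_eq_zero_of_forall_eq_zero fun m => ?_
          by_cases hm : m ≤ n
          · by_contra hne
            exact hmem (Set.mem_biUnion (Finset.mem_range.mpr (by omega)) hne)
          · exact hA_vanish n p r hr m _ s hs (by omega)
end

section
/- (Unique crossing consists of diameters; from the proofs of Proposition 8.2 and Theorem 8.4) Fix n ≥ 1 and let σ : ZMod (2n) → ZMod (2n) be an involution with σ(i + n) = σ(i) + n for all i. Suppose there is exactly one pair (i, j) ∈ ZMod (2n) × ZMod (2n) with val i < val j, val j < val (σ i) and val (σ i) < val (σ j). Then for this pair one has σ(i) = i + n and σ(j) = j + n. -/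
/-- Unique crossing consists of diameters (from the proofs of Proposition 8.2 and
Theorem 8.4): if `σ` is an involution of `ZMod (2n)` symmetric with respect to
rotation by `π`, with exactly one crossing pair `(i,j)` (that is, exactly one pair
with `val i < val j < val (σ i) < val (σ j)`), then for this pair one has
`σ i = i + n` and `σ j = j + n`. -/
theorem unique_crossing_diameters (n : ℕ) (hn : 1 ≤ n)
    (σ : ZMod (2 * n) → ZMod (2 * n))
    (hinv : Function.Involutive σ)
    (hsym : ∀ i : ZMod (2 * n), σ (i + (n : ZMod (2 * n))) = σ i + (n : ZMod (2 * n)))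
    (huniq : ∃! p : ZMod (2 * n) × ZMod (2 * n),
      p.1.val < p.2.val ∧ p.2.val < (σ p.1).val ∧ (σ p.1).val < (σ p.2).val)
    (i j : ZMod (2 * n))
    (hij : i.val < j.val ∧ j.val < (σ i).val ∧ (σ i).val < (σ j).val) :
    σ i = i + (n : ZMod (2 * n)) ∧ σ j = j + (n : ZMod (2 * n)) := by
  haveI : NeZero (2 * n) := ⟨by omega⟩
  have h0 : (n : ZMod (2 * n)) + n = 0 := by
    have h := ZMod.natCast_self (2 * n)
    push_cast at h
    linear_combination h
  have hcancel : ∀ x y : ZMod (2 * n), x + n = y → x = y + n := by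
    intro x y h
    rw [← h, add_assoc, h0, add_zero]
  have hval : ∀ x : ZMod (2 * n),
      (x + (n : ZMod (2 * n))).val = if x.val < n then x.val + n else x.val - n := by
    intro x
    have hx : x.val < 2 * n := ZMod.val_lt x
    rw [ZMod.val_add, ZMod.val_natCast, Nat.mod_eq_of_lt (by omega : n < 2 * n)]
    split
    · exact Nat.mod_eq_of_lt (by omega)
    · have h : x.val + n = (x.val - n) + 2 * n := by omega
      rw [h, Nat.add_mod_right, Nat.mod_eq_of_lt (by omega)]
  obtain ⟨p, -, hup⟩ := huniq
  have key : ∀ q : ZMod (2 * n) × ZMod (2 * n),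
      (q.1.val < q.2.val ∧ q.2.val < (σ q.1).val ∧ (σ q.1).val < (σ q.2).val) →
      q = (i, j) := fun q hq => (hup q hq).trans (hup (i, j) hij).symm
  obtain ⟨hab, hbc, hcd⟩ := hij
  have ha2 : i.val < 2 * n := ZMod.val_lt i
  have hd2 : (σ j).val < 2 * n := ZMod.val_lt (σ j)
  have hsi : σ (i + (n : ZMod (2 * n))) = σ i + n := hsym i
  have hsj : σ (j + (n : ZMod (2 * n))) = σ j + n := hsym j
  have hssi : σ (σ i + (n : ZMod (2 * n))) = i + n := by rw [hsym (σ i), hinv i]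
  have hssj : σ (σ j + (n : ZMod (2 * n))) = j + n := by rw [hsym (σ j), hinv j]
  by_cases hc : n ≤ (σ i).val
  · by_cases hb : j.val < n
    · -- good case: i.val < n ≤ (σ i).val, j.val < n ≤ (σ j).val
      have hq := key (σ i + n, σ j + n) (by
        refine ⟨?_, ?_, ?_⟩ <;>
          simp only [hssi, hssj, hval] <;> split_ifs <;> omega)
      have h1 : σ i + (n : ZMod (2 * n)) = i := congrArg Prod.fst hq
      have h2 : σ j + (n : ZMod (2 * n)) = j := congrArg Prod.snd hq
      exact ⟨hcancel _ _ h1, hcancel _ _ h2⟩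
    · by_cases ha : i.val < n
      · -- k = 1 : only i.val < n
        exfalso
        have hq := key (j + n, σ i + n) (by
          refine ⟨?_, ?_, ?_⟩ <;>
            simp only [hsj, hssi, hval] <;> split_ifs <;> omega)
        have h1 : j + (n : ZMod (2 * n)) = i := congrArg Prod.fst hq
        have h2 : σ i + (n : ZMod (2 * n)) = j := congrArg Prod.snd hq
        have h3 : i + (n : ZMod (2 * n)) = σ j := by rw [← h2, hssi]
        have e1 := congrArg ZMod.val h1
        have e3 := congrArg ZMod.val h3
        rw [hval, if_neg (by omega)] at e1
        rw [hval, if_pos (by omega)] at e3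
        omega
      · -- k = 0 : all values ≥ n
        exfalso
        have hq := key (i + n, j + n) (by
          refine ⟨?_, ?_, ?_⟩ <;>
            simp only [hsi, hsj, hval] <;> split_ifs <;> omega)
        have h1 : i + (n : ZMod (2 * n)) = i := congrArg Prod.fst hq
        have e1 := congrArg ZMod.val h1
        rw [hval, if_neg (by omega)] at e1
        omega
  · by_cases hd : (σ j).val < n
    · -- k = 4 : all values < n
      exfalso
      have hq := key (i + n, j + n) (by
        refine ⟨?_, ?_, ?_⟩ <;>
          simp only [hsi, hsj, hval] <;> split_ifs <;> omega)
      have h1 : i + (n : ZMod (2 * n)) = i := congrArg Prod.fst hq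
      have e1 := congrArg ZMod.val h1
      rw [hval, if_pos (by omega)] at e1
      omega
    · -- k = 3 : only (σ j).val ≥ n
      exfalso
      have hq := key (σ j + n, i + n) (by
        refine ⟨?_, ?_, ?_⟩ <;>
          simp only [hssj, hsi, hval] <;> split_ifs <;> omega)
      have h1 : σ j + (n : ZMod (2 * n)) = i := congrArg Prod.fst hq
      have h2 : i + (n : ZMod (2 * n)) = j := congrArg Prod.snd hq
      have h3 : j + (n : ZMod (2 * n)) = σ i := by rw [← h1, hssj]
      have e2 := congrArg ZMod.val h2
      have e3 := congrArg ZMod.val h3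
      rw [hval, if_pos (by omega)] at e2
      rw [hval, if_pos (by omega)] at e3
      omega
end

section
/- (At most one diameter in a symmetric 2-Brauer relation; from the proof of Proposition 7.3) Fix n ≥ 1 and let σ be a symmetric 2-Brauer relation of rank 2n. Then for all i, j ∈ ZMod (2n) with σ(i) = i + n and σ(j) = j + n, one has j = i or j = i + n; that is, σ pairs at most one antipodal pair (diameter) of points. -/
/-- A symmetric `2`-Brauer relation of rank `2n`: an involution `σ` of `ZMod (2n)`
which is noncrossing and symmetric with respect to rotation by `π`,
i.e. `σ (i + n) = σ i + n` for all `i`. -/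
def IsSymTwoBrauer (n : ℕ) (σ : ZMod (2 * n) → ZMod (2 * n)) : Prop :=
  Function.Involutive σ ∧
    (¬ ∃ i j : ZMod (2 * n),
        i.val < j.val ∧ j.val < (σ i).val ∧ (σ i).val < (σ j).val) ∧
    ∀ i : ZMod (2 * n), σ (i + (n : ZMod (2 * n))) = σ i + (n : ZMod (2 * n))

/-- At most one diameter in a symmetric `2`-Brauer relation (from the proof of
Proposition 7.3): if `σ` is a symmetric `2`-Brauer relation of rank `2n` and
`σ i = i + n` and `σ j = j + n`, then `j = i` or `j = i + n`. -/
theorem symTwoBrauer_at_most_one_diameter (n : ℕ) (hn : 1 ≤ n)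
    (σ : ZMod (2 * n) → ZMod (2 * n)) (hσ : IsSymTwoBrauer n σ)
    (i j : ZMod (2 * n))
    (hi : σ i = i + (n : ZMod (2 * n))) (hj : σ j = j + (n : ZMod (2 * n))) :
    j = i ∨ j = i + (n : ZMod (2 * n)) := by
  obtain ⟨hinv, hnc, hsym⟩ := hσ
  haveI : NeZero (2 * n) := ⟨by omega⟩
  have hval_n : (n : ZMod (2 * n)).val = n := by
    rw [ZMod.val_natCast]; exact Nat.mod_eq_of_lt (by omega)
  have hadd : ∀ x : ZMod (2 * n),
      (x + (n : ZMod (2 * n))).val = if x.val < n then x.val + n else x.val - n := by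
    intro x
    have hx : x.val < 2 * n := x.val_lt
    rw [ZMod.val_add, hval_n]
    split
    · exact Nat.mod_eq_of_lt (by omega)
    · have h : x.val + n = (x.val - n) + 2 * n := by omega
      rw [h, Nat.add_mod_right]
      exact Nat.mod_eq_of_lt (by omega)
  have hnn : ((n : ZMod (2 * n)) + n) = 0 := by
    rw [← Nat.cast_add]
    have : (n + n : ℕ) = 2 * n := by ring
    rw [this, ZMod.natCast_self]
  have hswap : ∀ x : ZMod (2 * n), σ x = x + n → σ (x + n) = (x + n) + n := by
    intro x hx
    rw [hsym, hx]
  have key : ∀ a b : ZMod (2 * n), a.val < n → b.val < n →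
      σ a = a + n → σ b = b + n → a = b := by
    intro a b ha hb hsa hsb
    have hva : (σ a).val = a.val + n := by rw [hsa, hadd]; simp [ha]
    have hvb : (σ b).val = b.val + n := by rw [hsb, hadd]; simp [hb]
    rcases lt_trichotomy a.val b.val with h | h | h
    · exact absurd ⟨a, b, h, by omega, by omega⟩ hnc
    · exact ZMod.val_injective _ h
    · exact absurd ⟨b, a, h, by omega, by omega⟩ hnc
  have hcancel : ∀ x y : ZMod (2 * n), x + n = y + n → x = y := by
    intro x y h
    have := congrArg (· + (n : ZMod (2 * n))) h
    simpa [add_assoc, hnn] using this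
  by_cases hvi : i.val < n <;> by_cases hvj : j.val < n
  · exact Or.inl (key j i hvj hvi hj hi)
  · right
    have hvjn : (j + (n : ZMod (2 * n))).val < n := by
      rw [hadd]; simp only [hvj, if_false]
      have := j.val_lt; omega
    have := key (j + n) i hvjn hvi (hswap j hj) hi
    have h2 : j + n + n = i + n := by rw [this]
    calc j = j + 0 := by rw [add_zero]
    _ = j + (n + n) := by rw [hnn]
    _ = i + n := by rw [← add_assoc]; exact h2
  · right
    have hvin : (i + (n : ZMod (2 * n))).val < n := by
      rw [hadd]; simp only [hvi, if_false]
      have := i.val_lt; omega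
    exact key j (i + n) hvj hvin hj (hswap i hi)
  · have hvin : (i + (n : ZMod (2 * n))).val < n := by
      rw [hadd]; simp only [hvi, if_false]
      have := i.val_lt; omega
    have hvjn : (j + (n : ZMod (2 * n))).val < n := by
      rw [hadd]; simp only [hvj, if_false]
      have := j.val_lt; omega
    exact Or.inl (hcancel j i (key (j + n) (i + n) hvjn hvin (hswap j hj) (hswap i hi)))
end
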